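/- Statement S̃(1) holds: for every d ≥ 1, ε ∈ (0,1], p ∈ [2,∞], every univariate polynomial φ ∈ 𝒫_{1,d}, every 0 < δ ≤ δ₀(d) and every interval R₀ ⊆ [−1,1] of length at least δ, there is a covering of {x ∈ R₀ : |φ(x)| ≤ δ} by a boundedly overlapping family of at most C(d) intervals contained in 2R₀, each of length at least δ, on each of which |φ| ≤ Cδ, such that {x ∈ R₀ : |φ(x)| ≤ δ} is ℓ^p(L^p)-decoupled into these intervals at cost C(d,ε,p) δ^{−ε}. -/

import Mathlib

/-!
Formalization of decoupling statements from "Decoupling for degenerate hypersurfaces"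
by Jianhui Li and Tongou Yang.
-/

open MeasureTheory ENNReal
open scoped RealInnerProductSpace BigOperators

noncomputable section

/-- Euclidean space `ℝ^n`. -/
abbrev Euc (n : ℕ) : Type := EuclideanSpace ℝ (Fin n)

/-- A parallelogram in `ℝ^n`: the set `{x + b : |x · uᵢ| ≤ lᵢ}` where the `uᵢ` form a basis
of unit vectors, recorded together with its defining data. -/
structure Parallelogram (n : ℕ) where
  u : Fin n → Euc n
  b : Euc n
  l : Fin n → ℝ
  unit_u : ∀ i, ‖u i‖ = 1
  indep_u : LinearIndependent ℝ u
  l_pos : ∀ i, 0 < l i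

namespace Parallelogram

/-- The concentric dilate `μR` of a parallelogram, as a set. -/
def dilate {n : ℕ} (R : Parallelogram n) (μ : ℝ) : Set (Euc n) :=
  {x | ∀ i, |⟪x - R.b, R.u i⟫| ≤ μ * R.l i}

/-- The set underlying a parallelogram. -/
def toSet {n : ℕ} (R : Parallelogram n) : Set (Euc n) := R.dilate 1

/-- The width (smallest dimension) of `R` is at least `δ`. -/
def WidthGE {n : ℕ} (R : Parallelogram n) (δ : ℝ) : Prop := ∀ i, δ ≤ R.l i

end Parallelogram

/-- The cube `[-r,r]^n`. -/
def cube (n : ℕ) (r : ℝ) : Set (Euc n) := {x | ∀ i, |x i| ≤ r}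

/-- The `ℓ^q` norm of a finite family of extended nonnegative reals. -/
def lqNorm {ι : Type} (q : ℝ≥0∞) (s : Finset ι) (g : ι → ℝ≥0∞) : ℝ≥0∞ :=
  if q = ∞ then s.sup g else (∑ i ∈ s, g i ^ q.toReal) ^ (1 / q.toReal)

/-- `S` is `ℓ^q(L^p)`-decoupled into the family `𝓡` at cost `K`: `S ⊆ ⋃ 𝓡` and, for all
Schwartz test functions `f_R` with Fourier support in `R ∩ S`,
`‖∑ f_R‖_p ≤ K (#𝓡)^(1/2-1/q) (∑ ‖f_R‖_p^q)^(1/q)`. -/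
def DecoupledAt {n : ℕ} (S : Set (Euc n)) (𝓡 : Finset (Parallelogram n))
    (p q : ℝ≥0∞) (K : ℝ) : Prop :=
  S ⊆ (⋃ R ∈ 𝓡, R.toSet) ∧
  ∀ f : Parallelogram n → SchwartzMap (Euc n) ℂ,
    (∀ R ∈ 𝓡, Function.support ⇑(SchwartzMap.fourierTransformCLM ℂ (f R)) ⊆ R.toSet ∩ S) →
    eLpNorm (fun x => ∑ R ∈ 𝓡, f R x) p volume ≤
      ENNReal.ofReal K * (𝓡.card : ℝ≥0∞) ^ ((1 : ℝ) / 2 - 1 / q.toReal) *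
        lqNorm q 𝓡 (fun R => eLpNorm (⇑(f R)) p volume)

/-- The vertical `δ`-neighbourhood `N_δ^φ(Ω) ⊆ ℝ^{n+1}` of the graph of `φ` over `Ω`. -/
def vertNbhd {n : ℕ} (φ : Euc n → ℝ) (Ω : Set (Euc n)) (δ : ℝ) : Set (Euc (n + 1)) :=
  {y | ∃ x ∈ Ω, ∃ c : ℝ, |c| ≤ δ ∧ (∀ i : Fin n, y (Fin.castSucc i) = x i) ∧
    y (Fin.last n) = φ x + c}

/-- `φ` is `δ`-flat on `A`: within `δ` of an affine function on `A`. -/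
def IsFlatOn {n : ℕ} (φ : Euc n → ℝ) (A : Set (Euc n)) (δ : ℝ) : Prop :=
  ∃ (L : Euc n →ₗ[ℝ] ℝ) (a : ℝ), ∀ x ∈ A, |φ x - (L x + a)| ≤ δ

/-- The parallelogram `P` is `c`-equivalent to the set `A`: `c⁻¹P ⊆ A ⊆ cP`. -/
def EquivToSet {m : ℕ} (P : Parallelogram m) (A : Set (Euc m)) (c : ℝ) : Prop :=
  P.dilate c⁻¹ ⊆ A ∧ A ⊆ P.dilate c

/-- `Ω₀` is `φ`-`ℓ^q(L^p)` decoupled at scale `δ` at cost `K` into the family of base sets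
`base i`, `i ∈ s`: the vertical neighbourhood `N_δ^φ(Ω₀)` is `ℓ^q(L^p)` decoupled into
parallelograms `c`-equivalent to the sets `N_δ^φ(base i)`. -/
def GraphDecoupledAt {n : ℕ} (φ : Euc n → ℝ) (Ω₀ : Set (Euc n)) {ι : Type}
    (s : Finset ι) (base : ι → Set (Euc n)) (δ : ℝ) (p q : ℝ≥0∞) (K c : ℝ) : Prop :=
  ∃ (𝓡' : Finset (Parallelogram (n + 1))) (g : Parallelogram (n + 1) → ι),
    (∀ P ∈ 𝓡', g P ∈ s ∧ EquivToSet P (vertNbhd φ (base (g P)) δ) c) ∧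
    DecoupledAt (vertNbhd φ Ω₀ δ) 𝓡' p q K

/-- `B` is an overlap function: increasing on `[1,∞)` and taking values `≥ 1` there. -/
def OverlapFun (B : ℝ → ℝ) : Prop :=
  MonotoneOn B (Set.Ici 1) ∧ ∀ μ : ℝ, 1 ≤ μ → 1 ≤ B μ

/-- The family `𝓡` is `B`-overlapping: for each `μ ≥ 1`, at most `B μ` of the dilates `μR`
contain any given point. -/
def Overlapping {n : ℕ} (𝓡 : Finset (Parallelogram n)) (B : ℝ → ℝ) : Prop :=
  ∀ μ : ℝ, 1 ≤ μ → ∀ x : Euc n,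
    (Set.ncard {R : Parallelogram n | R ∈ 𝓡 ∧ x ∈ R.dilate μ} : ℝ) ≤ B μ

/-- An indexed family of parallelograms is `B`-overlapping. -/
def OverlappingFam {n : ℕ} {ι : Type} (s : Finset ι) (Q : ι → Parallelogram n)
    (B : ℝ → ℝ) : Prop :=
  ∀ μ : ℝ, 1 ≤ μ → ∀ x : Euc n,
    (Set.ncard {q : ι | q ∈ s ∧ x ∈ (Q q).dilate μ} : ℝ) ≤ B μ

/-- Evaluation of a real polynomial in `n` variables at a point of `ℝ^n`. -/
def evalPoly {n : ℕ} (φ : MvPolynomial (Fin n) ℝ) : Euc n → ℝ :=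
  fun x => MvPolynomial.eval (fun i => x i) φ

/-- The class `𝒫_{n,d}`: polynomials of degree at most `d` with `|φ| ≤ 1` on `[-1,1]^n`. -/
def PolyClass (n d : ℕ) : Set (MvPolynomial (Fin n) ℝ) :=
  {φ | φ.totalDegree ≤ d ∧ ∀ x ∈ cube n 1, |evalPoly φ x| ≤ 1}

/-- The Hessian determinant of `φ` vanishes identically. -/
def HessDetZero {n : ℕ} (φ : MvPolynomial (Fin n) ℝ) : Prop :=
  (Matrix.of fun i j : Fin n => MvPolynomial.pderiv i (MvPolynomial.pderiv j φ)).det = 0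

/-- The exponent range endpoint `2(n+2)/n` for `U(n)`. -/
def uRange (n : ℕ) : ℝ≥0∞ := ENNReal.ofReal (2 * ((n : ℝ) + 2) / n)

/-- The exponent range endpoint `2(n+1)/(n-1)` for `S(n)` (all of `[2,∞]` when `n = 1`). -/
def sRange (n : ℕ) : ℝ≥0∞ :=
  if n ≤ 1 then ∞ else ENNReal.ofReal (2 * ((n : ℝ) + 1) / ((n : ℝ) - 1))

/-- Statement `U(n)`: uniform decoupling for graphs of polynomials in `𝒫_{n,d}`. -/
def StatementU (n : ℕ) : Prop :=
  ∀ d : ℕ, 1 ≤ d →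
    ∃ δ₀ : ℝ, 0 < δ₀ ∧
      ∀ ε : ℝ, 0 < ε → ε ≤ 1 →
        ∀ p : ℝ≥0∞, 2 ≤ p → p ≤ uRange n →
          ∃ C : ℝ, 0 < C ∧ ∃ B : ℝ → ℝ, OverlapFun B ∧ ∃ c : ℝ, 1 ≤ c ∧
            ∀ φ ∈ PolyClass n d, ∀ δ : ℝ, 0 < δ → δ ≤ δ₀ →
              ∃ 𝓡 : Finset (Parallelogram n),
                (cube n 1 ⊆ ⋃ R ∈ 𝓡, R.toSet) ∧
                (∀ R ∈ 𝓡, R.toSet ⊆ cube n 2 ∧ R.WidthGE δ ∧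
                  IsFlatOn (evalPoly φ) R.toSet δ) ∧
                Overlapping 𝓡 B ∧
                ((𝓡.card : ℝ) ≤ C * δ ^ (-(n : ℝ))) ∧
                GraphDecoupledAt (evalPoly φ) (cube n 1) 𝓡 Parallelogram.toSet δ p p
                  (C * δ ^ (-ε)) c

/-- Statement `Z(n)`: as `U(n)`, restricted to polynomials with identically vanishing
Hessian determinant. -/
def StatementZ (n : ℕ) : Prop :=
  ∀ d : ℕ, 1 ≤ d →
    ∃ δ₀ : ℝ, 0 < δ₀ ∧
      ∀ ε : ℝ, 0 < ε → ε ≤ 1 →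
        ∀ p : ℝ≥0∞, 2 ≤ p → p ≤ uRange n →
          ∃ C : ℝ, 0 < C ∧ ∃ B : ℝ → ℝ, OverlapFun B ∧ ∃ c : ℝ, 1 ≤ c ∧
            ∀ φ ∈ PolyClass n d, HessDetZero φ → ∀ δ : ℝ, 0 < δ → δ ≤ δ₀ →
              ∃ 𝓡 : Finset (Parallelogram n),
                (cube n 1 ⊆ ⋃ R ∈ 𝓡, R.toSet) ∧
                (∀ R ∈ 𝓡, R.toSet ⊆ cube n 2 ∧ R.WidthGE δ ∧
                  IsFlatOn (evalPoly φ) R.toSet δ) ∧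
                Overlapping 𝓡 B ∧
                ((𝓡.card : ℝ) ≤ C * δ ^ (-(n : ℝ))) ∧
                GraphDecoupledAt (evalPoly φ) (cube n 1) 𝓡 Parallelogram.toSet δ p p
                  (C * δ ^ (-ε)) c

/-- Statement `H(n)`: as `U(n)`, restricted to homogeneous polynomials. -/
def StatementH (n : ℕ) : Prop :=
  ∀ d : ℕ, 1 ≤ d →
    ∃ δ₀ : ℝ, 0 < δ₀ ∧
      ∀ ε : ℝ, 0 < ε → ε ≤ 1 →
        ∀ p : ℝ≥0∞, 2 ≤ p → p ≤ uRange n →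
          ∃ C : ℝ, 0 < C ∧ ∃ B : ℝ → ℝ, OverlapFun B ∧ ∃ c : ℝ, 1 ≤ c ∧
            ∀ φ ∈ PolyClass n d, (∃ k, MvPolynomial.IsHomogeneous φ k) →
              ∀ δ : ℝ, 0 < δ → δ ≤ δ₀ →
                ∃ 𝓡 : Finset (Parallelogram n),
                  (cube n 1 ⊆ ⋃ R ∈ 𝓡, R.toSet) ∧
                  (∀ R ∈ 𝓡, R.toSet ⊆ cube n 2 ∧ R.WidthGE δ ∧
                    IsFlatOn (evalPoly φ) R.toSet δ) ∧
                  Overlapping 𝓡 B ∧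
                  ((𝓡.card : ℝ) ≤ C * δ ^ (-(n : ℝ))) ∧
                  GraphDecoupledAt (evalPoly φ) (cube n 1) 𝓡 Parallelogram.toSet δ p p
                    (C * δ ^ (-ε)) c

/-- Statement `S(n)`: uniform sublevel set decoupling for `𝒫_{n,d}`. -/
def StatementS (n : ℕ) : Prop :=
  ∀ d : ℕ, 1 ≤ d →
    ∃ δ₀ : ℝ, 0 < δ₀ ∧
      ∀ ε : ℝ, 0 < ε → ε ≤ 1 →
        ∀ p : ℝ≥0∞, 2 ≤ p → p ≤ sRange n →
          ∃ C : ℝ, 0 < C ∧ ∃ B : ℝ → ℝ, OverlapFun B ∧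
            ∀ φ ∈ PolyClass n d, ∀ δ : ℝ, 0 < δ → δ ≤ δ₀ →
              ∃ 𝓢 : Finset (Parallelogram n),
                (∀ S ∈ 𝓢, S.toSet ⊆ cube n 2 ∧ S.WidthGE δ ∧
                  ∀ x ∈ S.toSet, |evalPoly φ x| ≤ C * δ) ∧
                Overlapping 𝓢 B ∧
                ((𝓢.card : ℝ) ≤ C * δ ^ (-(n : ℝ))) ∧
                DecoupledAt {x ∈ cube n 1 | |evalPoly φ x| ≤ δ} 𝓢 p p (C * δ ^ (-ε))

/-- Statement `Ũ(n)`: as `U(n)`, but decoupling an arbitrary sub-parallelogram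
`R₀ ⊆ [-1,1]^n` of width at least `δ`, with pieces contained in `2R₀`. -/
def StatementUt (n : ℕ) : Prop :=
  ∀ d : ℕ, 1 ≤ d →
    ∃ δ₀ : ℝ, 0 < δ₀ ∧
      ∀ ε : ℝ, 0 < ε → ε ≤ 1 →
        ∀ p : ℝ≥0∞, 2 ≤ p → p ≤ uRange n →
          ∃ C : ℝ, 0 < C ∧ ∃ B : ℝ → ℝ, OverlapFun B ∧ ∃ c : ℝ, 1 ≤ c ∧
            ∀ φ ∈ PolyClass n d, ∀ δ : ℝ, 0 < δ → δ ≤ δ₀ →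
              ∀ R₀ : Parallelogram n, R₀.toSet ⊆ cube n 1 → R₀.WidthGE δ →
                ∃ 𝓡 : Finset (Parallelogram n),
                  (R₀.toSet ⊆ ⋃ R ∈ 𝓡, R.toSet) ∧
                  (∀ R ∈ 𝓡, R.toSet ⊆ R₀.dilate 2 ∧ R.WidthGE δ ∧
                    IsFlatOn (evalPoly φ) R.toSet δ) ∧
                  Overlapping 𝓡 B ∧
                  GraphDecoupledAt (evalPoly φ) R₀.toSet 𝓡 Parallelogram.toSet δ p p
                    (C * δ ^ (-ε)) c

/-- Statement `S̃(n)`: as `S(n)`, but decoupling the sublevel set inside an arbitrary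
sub-parallelogram `R₀ ⊆ [-1,1]^n` of width at least `δ`, with pieces contained in `2R₀`. -/
def StatementSt (n : ℕ) : Prop :=
  ∀ d : ℕ, 1 ≤ d →
    ∃ δ₀ : ℝ, 0 < δ₀ ∧
      ∀ ε : ℝ, 0 < ε → ε ≤ 1 →
        ∀ p : ℝ≥0∞, 2 ≤ p → p ≤ sRange n →
          ∃ C : ℝ, 0 < C ∧ ∃ B : ℝ → ℝ, OverlapFun B ∧
            ∀ φ ∈ PolyClass n d, ∀ δ : ℝ, 0 < δ → δ ≤ δ₀ →
              ∀ R₀ : Parallelogram n, R₀.toSet ⊆ cube n 1 → R₀.WidthGE δ →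
                ∃ 𝓢 : Finset (Parallelogram n),
                  (∀ S ∈ 𝓢, S.toSet ⊆ R₀.dilate 2 ∧ S.WidthGE δ ∧
                    ∀ x ∈ S.toSet, |evalPoly φ x| ≤ C * δ) ∧
                  Overlapping 𝓢 B ∧
                  DecoupledAt {x ∈ R₀.toSet | |evalPoly φ x| ≤ δ} 𝓢 p p (C * δ ^ (-ε))

/-- The function `ψ(x,y) = η(x) + φ(y)` on `ℝ^{n+1}`. -/
def addEta {n : ℕ} (η : ℝ → ℝ) (φ : MvPolynomial (Fin n) ℝ) : Euc (n + 1) → ℝ :=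
  fun z => η (z 0) + evalPoly φ ((WithLp.toLp 2 (fun i : Fin n => z i.succ)) : Euc n)

/-- The product `I × R ⊆ ℝ^{n+1}` of the `k`-th interval of the `√δ`-tiling of `[-1,1]` with
a parallelogram `R ⊆ ℝ^n`. -/
def tileProd {n : ℕ} (δ : ℝ) (q : ℤ × Parallelogram n) : Set (Euc (n + 1)) :=
  {z | z 0 ∈ Set.Icc (-1 + (q.1 : ℝ) * Real.sqrt δ) (-1 + ((q.1 : ℝ) + 1) * Real.sqrt δ) ∧
    ((WithLp.toLp 2 (fun i : Fin n => z i.succ)) : Euc n) ∈ q.2.toSet}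

/-- Statement `IZ(n)`: for every `C²` function `η` on `[-1,1]` with nonvanishing second
derivative and every `φ ∈ 𝒫_{n,d}` with vanishing Hessian determinant, the cube
`[-1,1]^{n+1}` can be decoupled for `ψ(x,y) = η(x) + φ(y)` into products `I × R`, where the
constants depend on `η` only through a `C²` bound `M` and a lower bound `κ` on `|η''|`. -/
def StatementIZ (n : ℕ) : Prop :=
  ∀ d : ℕ, 1 ≤ d →
    ∃ δ₀ : ℝ, 0 < δ₀ ∧
      ∀ M κ : ℝ, 0 < κ →
        ∀ ε : ℝ, 0 < ε → ε ≤ 1 →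
          ∀ p : ℝ≥0∞, 2 ≤ p → p ≤ uRange n →
            ∃ C : ℝ, 0 < C ∧ ∃ B : ℝ → ℝ, OverlapFun B ∧ ∃ c : ℝ, 1 ≤ c ∧
              ∀ η : ℝ → ℝ, ContDiffOn ℝ 2 η (Set.Icc (-1) 1) →
                (∀ t ∈ Set.Icc (-1 : ℝ) 1,
                  |η t| ≤ M ∧ |deriv η t| ≤ M ∧ |deriv (deriv η) t| ≤ M) →
                (∀ t ∈ Set.Icc (-1 : ℝ) 1, κ ≤ |deriv (deriv η) t|) →
                ∀ φ ∈ PolyClass n d, HessDetZero φ → ∀ δ : ℝ, 0 < δ → δ ≤ δ₀ →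
                  ∃ 𝓡 : Finset (Parallelogram n),
                    (cube n 1 ⊆ ⋃ R ∈ 𝓡, R.toSet) ∧
                    (∀ R ∈ 𝓡, R.toSet ⊆ cube n 2 ∧ R.WidthGE δ ∧
                      IsFlatOn (evalPoly φ) R.toSet δ) ∧
                    Overlapping 𝓡 B ∧
                    ∃ s : Finset (ℤ × Parallelogram n),
                      (∀ q ∈ s, q.2 ∈ 𝓡 ∧ 0 ≤ q.1 ∧ (q.1 : ℝ) * Real.sqrt δ ≤ 2) ∧
                      GraphDecoupledAt (addEta η φ) (cube (n + 1) 1) s (tileProd δ) δ p p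
                        (C * δ ^ (-ε)) c


/-- The class `𝒫_{1,d}` of univariate polynomials. -/
def Poly1Class (d : ℕ) : Set (Polynomial ℝ) :=
  {A | A.natDegree ≤ d ∧ ∀ t ∈ Set.Icc (-1 : ℝ) 1, |Polynomial.eval t A| ≤ 1}

/-- The near-affine function `φ(x) = A₁(x₁) + A₂(x₁)x₂ + ⋯ + Aₙ(x₁)xₙ`. -/
def nearAffine {n : ℕ} (A : Fin (n + 1) → Polynomial ℝ) : Euc (n + 1) → ℝ :=
  fun x => (A 0).eval (x 0) +
    ∑ i ∈ Finset.univ.filter (fun i : Fin (n + 1) => i ≠ 0), (A i).eval (x 0) * x i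

/-- Append a last coordinate to a point of `ℝ^m`. -/
def snocE {m : ℕ} (x : Euc m) (t : ℝ) : Euc (m + 1) :=
  WithLp.toLp 2 (Fin.snoc (fun j => x j) t : Fin (m + 1) → ℝ)

private lemma LY_pow_lip (i : ℕ) (x y : ℝ) (hx : |x| ≤ 2) (hy : |y| ≤ 2) :
    |x ^ i - y ^ i| ≤ (i * 2 ^ i : ℝ) * |x - y| := by
  induction i with
  | zero => simp
  | succ n ih =>
    have h1 : x ^ (n+1) - y ^ (n+1) = x * (x ^ n - y ^ n) + (x - y) * y ^ n := by ring
    have h2 : |x * (x ^ n - y ^ n)| ≤ 2 * ((n * 2 ^ n : ℝ) * |x - y|) := by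
      rw [abs_mul]
      exact mul_le_mul hx ih (abs_nonneg _) (by norm_num)
    have h3 : |(x - y) * y ^ n| ≤ |x - y| * 2 ^ n := by
      rw [abs_mul]
      refine mul_le_mul_of_nonneg_left ?_ (abs_nonneg _)
      calc |y ^ n| = |y| ^ n := abs_pow y n
        _ ≤ 2 ^ n := pow_le_pow_left₀ (abs_nonneg _) hy n
    calc |x ^ (n+1) - y ^ (n+1)| ≤ |x * (x ^ n - y ^ n)| + |(x - y) * y ^ n| := by
          rw [h1]; exact abs_add_le _ _
      _ ≤ 2 * ((n * 2 ^ n : ℝ) * |x - y|) + |x - y| * 2 ^ n := add_le_add h2 h3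
      _ ≤ ((n + 1 : ℕ) * 2 ^ (n + 1) : ℝ) * |x - y| := by
          have hA : (0:ℝ) ≤ |x - y| := abs_nonneg _
          have hB : (0:ℝ) ≤ 2 ^ n := pow_nonneg (by norm_num) n
          have h4 : (((n:ℕ):ℝ) + 1) * 2 ^ (n + 1) * |x - y|
              = 2 * ((n:ℝ) * 2 ^ n * |x - y|) + 2 * (2 ^ n * |x - y|) := by
            rw [pow_succ]; ring
          have h5 : |x - y| * 2 ^ n ≤ 2 * (2 ^ n * |x - y|) := by nlinarith
          push_cast
          push_cast at h4
          linarith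

private lemma LY_coeff_bound (d : ℕ) :
    ∃ c : ℝ, 0 ≤ c ∧ ∀ ψ : Polynomial ℝ, ψ.natDegree ≤ d →
      (∀ t ∈ Set.Icc (-1:ℝ) 1, |ψ.eval t| ≤ 1) → ∀ i, |ψ.coeff i| ≤ c := by
  classical
  set K := Set.Icc (-1:ℝ) 1
  haveI : CompactSpace K := isCompact_iff_compactSpace.mp isCompact_Icc
  let T : (Fin (d+1) → ℝ) →ₗ[ℝ] C(K, ℝ) :=
    { toFun := fun a => ⟨fun t => ∑ i : Fin (d+1), a i * (t:ℝ) ^ (i:ℕ), by fun_prop⟩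
      map_add' := by
        intro a b; ext t
        simp [add_mul, Finset.sum_add_distrib]
      map_smul' := by
        intro r a; ext t
        simp [Finset.mul_sum, mul_assoc] }
  letI : SeminormedAddCommGroup (LinearMap.range T) := Submodule.seminormedAddCommGroup _
  letI : NormedSpace ℝ (LinearMap.range T) := Submodule.normedSpace _
  have hTapp : ∀ a (t : K), T a t = ∑ i : Fin (d+1), a i * (t:ℝ) ^ (i:ℕ) := fun a t => rfl
  have hinj : Function.Injective T := by
    intro a b hab
    have h : ∀ t : ℝ, t ∈ K → ∑ i : Fin (d+1), a i * t ^ (i:ℕ) = ∑ i : Fin (d+1), b i * t ^ (i:ℕ) := by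
      intro t ht
      have := congrArg (fun f : C(K, ℝ) => f ⟨t, ht⟩) hab
      simpa [hTapp] using this
    -- consider the difference polynomial
    set P : Polynomial ℝ := ∑ i : Fin (d+1), Polynomial.C (a i - b i) * Polynomial.X ^ (i:ℕ) with hP
    have hPeval : ∀ t : ℝ, t ∈ K → P.eval t = 0 := by
      intro t ht
      have := h t ht
      simp only [hP, Polynomial.eval_finset_sum, Polynomial.eval_mul, Polynomial.eval_C,
        Polynomial.eval_pow, Polynomial.eval_X, sub_mul]
      rw [Finset.sum_sub_distrib]
      linarith [this]
    have hKinf : K.Infinite := Set.Icc_infinite (by norm_num : (-1:ℝ) < 1)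
    have hP0 : P = 0 := by
      apply Polynomial.eq_zero_of_infinite_isRoot
      exact hKinf.mono (fun t ht => hPeval t ht)
    funext j
    have hcoeff : P.coeff (j:ℕ) = a j - b j := by
      rw [hP, Polynomial.finset_sum_coeff]
      rw [Finset.sum_eq_single j]
      · simp [sub_mul, Polynomial.coeff_X_pow]
      · intro i _ hij
        simp only [Polynomial.coeff_C_mul, Polynomial.coeff_X_pow]
        rw [if_neg (by exact fun hh => hij (Fin.ext hh.symm))]
        ring
      · simp
    rw [hP0] at hcoeff
    simp at hcoeff
    linarith [hcoeff]
  let e : (Fin (d+1) → ℝ) ≃ₗ[ℝ] LinearMap.range T := LinearEquiv.ofInjective T hinj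
  let e' := e.toContinuousLinearEquiv
  let S : LinearMap.range T →L[ℝ] (Fin (d+1) → ℝ) := e'.symm
  refine ⟨‖S‖, S.opNorm_nonneg, ?_⟩
  intro ψ hdeg hsup i
  set a : Fin (d+1) → ℝ := fun i => ψ.coeff (i:ℕ) with ha
  have hTa : ∀ t : K, T a t = ψ.eval (t:ℝ) := by
    intro t
    rw [hTapp, Polynomial.eval_eq_sum_range' (lt_of_le_of_lt hdeg (Nat.lt_succ_self d)),
      ← Fin.sum_univ_eq_sum_range (fun i => ψ.coeff i * (t:ℝ) ^ i) (d+1)]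
  have hnorm : ‖T a‖ ≤ 1 := by
    rw [ContinuousMap.norm_le _ zero_le_one]
    intro t
    rw [hTa]
    simpa [Real.norm_eq_abs] using hsup (t:ℝ) t.2
  have hSa : S ⟨T a, LinearMap.mem_range_self T a⟩ = a := by
    have : (⟨T a, LinearMap.mem_range_self T a⟩ : LinearMap.range T) = e' a := Subtype.ext (by
      have h1 : e' a = e a := rfl
      rw [h1]
      exact (LinearEquiv.ofInjective_apply T a).symm ▸ rfl)
    rw [this]
    exact e'.symm_apply_apply a
  have hbound : ‖a‖ ≤ ‖S‖ := by
    calc ‖a‖ = ‖S ⟨T a, LinearMap.mem_range_self T a⟩‖ := by rw [hSa]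
      _ ≤ ‖S‖ * ‖(⟨T a, LinearMap.mem_range_self T a⟩ : LinearMap.range T)‖ := S.le_opNorm _
      _ = ‖S‖ * ‖T a‖ := rfl
      _ ≤ ‖S‖ * 1 := by
          exact mul_le_mul_of_nonneg_left hnorm S.opNorm_nonneg
      _ = ‖S‖ := mul_one _
  by_cases hi : i ≤ d
  · have : |a ⟨i, Nat.lt_succ_of_le hi⟩| ≤ ‖a‖ := norm_le_pi_norm a _
    simpa [ha] using this.trans hbound
  · rw [Polynomial.coeff_eq_zero_of_natDegree_lt (lt_of_le_of_lt hdeg (not_le.mp hi))]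
    rw [abs_zero]; exact le_trans (norm_nonneg a) hbound

private lemma LY_lip (d : ℕ) :
    ∃ L : ℝ, 0 ≤ L ∧ ∀ ψ : Polynomial ℝ, ψ.natDegree ≤ d →
      (∀ t ∈ Set.Icc (-1:ℝ) 1, |ψ.eval t| ≤ 1) →
      ∀ x ∈ Set.Icc (-2:ℝ) 2, ∀ y ∈ Set.Icc (-2:ℝ) 2,
        |ψ.eval x - ψ.eval y| ≤ L * |x - y| := by
  obtain ⟨c, hc0, hc⟩ := LY_coeff_bound d
  set M : ℝ := ((d+1 : ℕ) : ℝ) * 2 ^ (d+1) with hM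
  have hM0 : 0 ≤ M := by positivity
  refine ⟨c * ((d+1 : ℕ) : ℝ) * M, by positivity, ?_⟩
  intro ψ hdeg hsup x hx y hy
  have hx2 : |x| ≤ 2 := abs_le.mpr ⟨hx.1, hx.2⟩
  have hy2 : |y| ≤ 2 := abs_le.mpr ⟨hy.1, hy.2⟩
  have hev : ∀ t : ℝ, ψ.eval t = ∑ i ∈ Finset.range (d+1), ψ.coeff i * t ^ i :=
    fun t => Polynomial.eval_eq_sum_range' (Nat.lt_succ_of_le hdeg) t
  rw [hev x, hev y, ← Finset.sum_sub_distrib]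
  have habs : (0:ℝ) ≤ |x - y| := abs_nonneg _
  calc |∑ i ∈ Finset.range (d+1), (ψ.coeff i * x ^ i - ψ.coeff i * y ^ i)|
      ≤ ∑ i ∈ Finset.range (d+1), |ψ.coeff i * x ^ i - ψ.coeff i * y ^ i| :=
        Finset.abs_sum_le_sum_abs _ _
    _ ≤ ∑ _i ∈ Finset.range (d+1), c * M * |x - y| := by
        refine Finset.sum_le_sum fun i hi => ?_
        rw [← mul_sub, abs_mul]
        have h1 := LY_pow_lip i x y hx2 hy2
        have h2 : ((i:ℝ) * 2 ^ i) ≤ M := by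
          rw [hM]
          have hi' : i ≤ d + 1 := Nat.le_of_lt_succ (Finset.mem_range.mp hi) |>.trans (Nat.le_succ d)
          have hia : ((i:ℝ)) ≤ ((d+1:ℕ):ℝ) := by exact_mod_cast hi'
          have h2' : (2:ℝ) ^ i ≤ 2 ^ (d+1) := pow_le_pow_right₀ (by norm_num) hi'
          have h2n : (0:ℝ) ≤ 2 ^ i := pow_nonneg (by norm_num) i
          have hin : (0:ℝ) ≤ (i:ℝ) := Nat.cast_nonneg i
          nlinarith
        have h3 : (0:ℝ) ≤ (i:ℝ) * 2 ^ i := by positivity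
        calc |ψ.coeff i| * |x ^ i - y ^ i| ≤ c * (((i:ℝ) * 2 ^ i) * |x - y|) :=
              mul_le_mul (hc ψ hdeg hsup i) h1 (abs_nonneg _) hc0
          _ ≤ c * (M * |x - y|) :=
              mul_le_mul_of_nonneg_left (mul_le_mul_of_nonneg_right h2 habs) hc0
          _ = c * M * |x - y| := by ring
    _ = ((d+1:ℕ):ℝ) * (c * M * |x - y|) := by
        rw [Finset.sum_const, Finset.card_range, nsmul_eq_mul]
    _ = c * ((d+1:ℕ):ℝ) * M * |x - y| := by ring

private lemma LY_dilate_mem (P : Parallelogram 1) (μ : ℝ) (x : Euc 1) :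
    x ∈ P.dilate μ ↔ |x 0 - P.b 0| ≤ μ * P.l 0 := by
  have hu : |P.u 0 0| = 1 := by
    have h := P.unit_u 0
    rw [EuclideanSpace.norm_eq, Fin.sum_univ_one, Real.norm_eq_abs, sq_abs,
      Real.sqrt_sq_eq_abs] at h
    exact h
  have hinner : ∀ i : Fin 1, ⟪x - P.b, P.u i⟫ = (x 0 - P.b 0) * P.u 0 0 := by
    intro i
    rw [Subsingleton.elim i 0, PiLp.inner_apply, Fin.sum_univ_one]
    simp [RCLike.inner_apply]; ring
  constructor
  · intro h
    have h0 := h 0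
    rw [hinner 0, abs_mul, hu, mul_one] at h0
    exact h0
  · intro h i
    rw [hinner i, abs_mul, hu, mul_one, Subsingleton.elim i 0]
    exact h

private def LY_mkP (c l : ℝ) : Parallelogram 1 where
  u := fun _ => (WithLp.toLp 2 (fun _ => (1:ℝ)) : Euc 1)
  b := (WithLp.toLp 2 (fun _ => c) : Euc 1)
  l := fun _ => if 0 < l then l else 1
  unit_u := by
    intro i
    rw [EuclideanSpace.norm_eq, Fin.sum_univ_one]
    norm_num
  indep_u := by
    refine linearIndependent_unique_iff.mpr ?_
    intro h
    have := congrArg (fun v : Euc 1 => v 0) h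
    norm_num at this
  l_pos := by
    intro i
    by_cases h : 0 < l
    · simpa [if_pos h] using h
    · simp [if_neg h]

private lemma LY_mkP_mem (c l μ : ℝ) (hl : 0 < l) (x : Euc 1) :
    x ∈ (LY_mkP c l).dilate μ ↔ |x 0 - c| ≤ μ * l := by
  rw [LY_dilate_mem]
  simp [LY_mkP, if_pos hl]

private lemma LY_overlap {n : ℕ} (𝓢 : Finset (Parallelogram n)) (C₁ : ℝ)
    (h : (𝓢.card : ℝ) ≤ C₁) : Overlapping 𝓢 (fun _ => C₁) := by
  intro μ hμ x
  refine le_trans ?_ h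
  have hsub : {R | R ∈ 𝓢 ∧ x ∈ R.dilate μ} ⊆ (𝓢 : Set (Parallelogram n)) := fun R hR => hR.1
  have h2 := Set.ncard_le_ncard hsub (𝓢.finite_toSet)
  rw [Set.ncard_coe_finset] at h2
  exact_mod_cast h2

private lemma LY_dec {n : ℕ} (S : Set (Euc n)) (𝓢 : Finset (Parallelogram n)) (p : ℝ≥0∞)
    (hp : 2 ≤ p) (K : ℝ) (hK : (𝓢.card : ℝ) ≤ K)
    (hcov : S ⊆ ⋃ R ∈ 𝓢, R.toSet) : DecoupledAt S 𝓢 p p K := by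
  classical
  refine ⟨hcov, ?_⟩
  intro f hf
  have hp1 : (1:ℝ≥0∞) ≤ p := le_trans one_le_two hp
  have hmeas : ∀ R ∈ 𝓢, AEStronglyMeasurable (⇑(f R)) (volume : Measure (Euc n)) :=
    fun R _ => (f R).continuous.aestronglyMeasurable
  have hsum : (fun x => ∑ R ∈ 𝓢, f R x) = ∑ R ∈ 𝓢, ⇑(f R) := by
    funext x; rw [Finset.sum_apply]
  set g : Parallelogram n → ℝ≥0∞ := fun R => eLpNorm (⇑(f R)) p volume with hg
  set M := lqNorm p 𝓢 g with hMdef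
  have hgM : ∀ R ∈ 𝓢, g R ≤ M := by
    intro R hR
    rw [hMdef, lqNorm]
    by_cases hptop : p = ∞
    · rw [if_pos hptop]; exact Finset.le_sup hR
    · rw [if_neg hptop]
      have hp0 : p ≠ 0 := by
        intro h0; rw [h0] at hp
        exact absurd hp (by simp)
      have ht : 0 < p.toReal := ENNReal.toReal_pos hp0 hptop
      have h1 : g R = (g R ^ p.toReal) ^ (1 / p.toReal) := by
        rw [← ENNReal.rpow_mul, mul_one_div_cancel ht.ne', ENNReal.rpow_one]
      rw [h1]
      exact ENNReal.rpow_le_rpow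
        (Finset.single_le_sum (f := fun R => g R ^ p.toReal) (fun i _ => zero_le) hR)
        (by positivity)
  have hcard : (𝓢.card : ℝ≥0∞) ≤
      ENNReal.ofReal K * (𝓢.card : ℝ≥0∞) ^ ((1:ℝ)/2 - 1/p.toReal) := by
    by_cases hc0 : 𝓢.card = 0
    · rw [hc0]; simp
    · have h1c : (1:ℝ≥0∞) ≤ (𝓢.card : ℝ≥0∞) := by
        exact_mod_cast Nat.one_le_cast.mpr (Nat.pos_of_ne_zero hc0)
      have he : (0:ℝ) ≤ (1:ℝ)/2 - 1/p.toReal := by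
        by_cases hptop : p = ∞
        · rw [hptop]; norm_num
        · have h2 : (2:ℝ) ≤ p.toReal := by
            have := ENNReal.toReal_mono hptop hp
            simpa using this
          have : 1/p.toReal ≤ 1/2 := by
            apply one_div_le_one_div_of_le <;> linarith
          linarith
      have h2 : (1:ℝ≥0∞) ≤ (𝓢.card : ℝ≥0∞) ^ ((1:ℝ)/2 - 1/p.toReal) := by
        calc (1:ℝ≥0∞) = (1:ℝ≥0∞) ^ ((1:ℝ)/2 - 1/p.toReal) := (ENNReal.one_rpow _).symm
          _ ≤ (𝓢.card : ℝ≥0∞) ^ ((1:ℝ)/2 - 1/p.toReal) := ENNReal.rpow_le_rpow h1c he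
      have h3 : (𝓢.card : ℝ≥0∞) ≤ ENNReal.ofReal K := by
        rw [← ENNReal.ofReal_natCast]
        exact ENNReal.ofReal_le_ofReal hK
      calc (𝓢.card : ℝ≥0∞) = (𝓢.card : ℝ≥0∞) * 1 := (mul_one _).symm
        _ ≤ ENNReal.ofReal K * (𝓢.card : ℝ≥0∞) ^ ((1:ℝ)/2 - 1/p.toReal) := mul_le_mul' h3 h2
  calc eLpNorm (fun x => ∑ R ∈ 𝓢, f R x) p volume
      = eLpNorm (∑ R ∈ 𝓢, ⇑(f R)) p volume := by rw [hsum]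
    _ ≤ ∑ R ∈ 𝓢, g R := eLpNorm_sum_le hmeas hp1
    _ ≤ 𝓢.card • M := Finset.sum_le_card_nsmul _ _ _ hgM
    _ = (𝓢.card : ℝ≥0∞) * M := nsmul_eq_mul _ _
    _ ≤ (ENNReal.ofReal K * (𝓢.card : ℝ≥0∞) ^ ((1:ℝ)/2 - 1/p.toReal)) * M :=
        mul_le_mul_left hcard M
    _ = ENNReal.ofReal K * (𝓢.card : ℝ≥0∞) ^ ((1:ℝ)/2 - 1/p.toReal) * lqNorm p 𝓢 g := rfl

private lemma LY_aeval_eval (q : MvPolynomial (Fin 1) ℝ) (t : ℝ) :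
    (MvPolynomial.aeval (fun _ : Fin 1 => Polynomial.X) q : Polynomial ℝ).eval t
      = MvPolynomial.eval (fun _ : Fin 1 => t) q := by
  induction q using MvPolynomial.induction_on with
  | C a => simp
  | add p q hp hq => simp [hp, hq]
  | mul_X p i hp => simp [hp]

private lemma LY_natDegree (q : MvPolynomial (Fin 1) ℝ) (d : ℕ) (hq : q.totalDegree ≤ d) :
    (MvPolynomial.aeval (fun _ : Fin 1 => Polynomial.X) q : Polynomial ℝ).natDegree ≤ d := by
  conv_lhs => rw [← MvPolynomial.support_sum_monomial_coeff q]
  rw [map_sum]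
  apply Polynomial.natDegree_sum_le_of_forall_le
  intro s hs
  have hd : (s.sum fun _ e => e) ≤ d := le_trans (MvPolynomial.le_totalDegree hs) hq
  rw [MvPolynomial.aeval_monomial, Finsupp.prod, Finset.prod_pow_eq_pow_sum]
  refine le_trans ?_ hd
  have : (algebraMap ℝ (Polynomial ℝ)) (MvPolynomial.coeff s q) =
      Polynomial.C (MvPolynomial.coeff s q) := rfl
  rw [this]
  exact le_trans (Polynomial.natDegree_C_mul_X_pow_le _ _) le_rfl

set_option maxHeartbeats 1500000 in
/-- **Proposition (Li–Yang, δ-thickening).** `S̃(1)` holds: sublevel sets of univariate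
polynomials inside a subinterval `R₀ ⊆ [-1,1]` of length at least `δ` can be covered by at
most `C₁(d)` boundedly overlapping intervals in `2R₀` of length at least `δ`, on each of
which `|φ| ≤ Cδ`, and into which the sublevel set is `ℓ^p(L^p)`-decoupled at cost
`C₂ δ^{-ε}`, for all `p ∈ [2,∞]`. -/
theorem St1_holds :
    ∀ d : ℕ, 1 ≤ d →
      ∃ δ₀ : ℝ, 0 < δ₀ ∧ ∃ C₁ C : ℝ, 0 < C₁ ∧ 0 < C ∧ ∃ B : ℝ → ℝ, OverlapFun B ∧
        ∀ ε : ℝ, 0 < ε → ε ≤ 1 →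
          ∀ p : ℝ≥0∞, 2 ≤ p →
            ∃ C₂ : ℝ, 0 < C₂ ∧
              ∀ φ ∈ PolyClass 1 d, ∀ δ : ℝ, 0 < δ → δ ≤ δ₀ →
                ∀ R₀ : Parallelogram 1, R₀.toSet ⊆ cube 1 1 → R₀.WidthGE δ →
                  ∃ 𝓢 : Finset (Parallelogram 1),
                    ((𝓢.card : ℝ) ≤ C₁) ∧
                    (∀ S ∈ 𝓢, S.toSet ⊆ R₀.dilate 2 ∧ S.WidthGE δ ∧
                      ∀ x ∈ S.toSet, |evalPoly φ x| ≤ C * δ) ∧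
                    Overlapping 𝓢 B ∧
                    DecoupledAt {x ∈ R₀.toSet | |evalPoly φ x| ≤ δ} 𝓢 p p
                      (C₂ * δ ^ (-ε)) := by
  intro d hd
  classical
  obtain ⟨L, hL0, hLip⟩ := LY_lip d
  set C₁ : ℝ := (2*(d:ℝ)+2)^2 + (2*(d:ℝ)+2) with hC₁
  have hd0 : (0:ℝ) ≤ (d:ℝ) := Nat.cast_nonneg d
  have hC₁1 : (1:ℝ) ≤ C₁ := by rw [hC₁]; nlinarith
  have hC₁0 : (0:ℝ) < C₁ := lt_of_lt_of_le one_pos hC₁1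
  refine ⟨1, one_pos, C₁, 1 + L, hC₁0, by linarith, fun _ => C₁,
    ⟨monotoneOn_const, fun μ _ => hC₁1⟩, ?_⟩
  intro ε hε hε1 p hp
  refine ⟨C₁, hC₁0, ?_⟩
  intro φ hφ δ hδ hδ1 R₀ hR₀sub hR₀w
  have hl0 : 0 < R₀.l 0 := R₀.l_pos 0
  have hδl0 : δ ≤ R₀.l 0 := hR₀w 0
  set A : ℝ := R₀.b 0 - R₀.l 0 with hA
  set Bb : ℝ := R₀.b 0 + R₀.l 0 with hB
  set ψ : Polynomial ℝ := MvPolynomial.aeval (fun _ : Fin 1 => Polynomial.X) φ with hψdef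
  have heval : ∀ x : Euc 1, evalPoly φ x = ψ.eval (x 0) := by
    intro x
    rw [hψdef, LY_aeval_eval]
    unfold evalPoly
    have hfun : (fun i : Fin 1 => x i) = (fun _ : Fin 1 => x 0) :=
      funext fun i => by rw [Subsingleton.elim i 0]
    rw [hfun]
  have hdeg : ψ.natDegree ≤ d := by rw [hψdef]; exact LY_natDegree φ d hφ.1
  have hsup : ∀ t ∈ Set.Icc (-1:ℝ) 1, |ψ.eval t| ≤ 1 := by
    intro t ht
    have hx : ((WithLp.toLp 2 (fun _ => t)) : Euc 1) ∈ cube 1 1 := by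
      intro i; simpa using abs_le.mpr ⟨ht.1, ht.2⟩
    simpa [heval] using hφ.2 _ hx
  have hR₀mem : ∀ x : Euc 1, x ∈ R₀.toSet ↔ |x 0 - R₀.b 0| ≤ R₀.l 0 := by
    intro x
    rw [Parallelogram.toSet, LY_dilate_mem, one_mul]
  have hIccsub : Set.Icc A Bb ⊆ Set.Icc (-1:ℝ) 1 := by
    intro t ht
    have hmem : ((WithLp.toLp 2 (fun _ => t)) : Euc 1) ∈ R₀.toSet := by
      rw [hR₀mem]
      show |t - R₀.b 0| ≤ R₀.l 0
      rw [abs_le]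
      constructor
      · linarith [ht.1, hA]
      · linarith [ht.2, hB]
    have h2 : |t| ≤ 1 := by simpa using hR₀sub hmem 0
    rw [abs_le] at h2
    exact ⟨h2.1, h2.2⟩
  have hnear : ∀ s y : ℝ, s ∈ Set.Icc A Bb → |ψ.eval s| ≤ δ → |y - s| ≤ δ →
      |ψ.eval y| ≤ (1+L)*δ := by
    intro s y hs hψs hys
    have hs1 := hIccsub hs
    have hs2 : s ∈ Set.Icc (-2:ℝ) 2 := ⟨by linarith [hs1.1], by linarith [hs1.2]⟩
    have hysle := abs_le.mp hys
    have hy2 : y ∈ Set.Icc (-2:ℝ) 2 :=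
      ⟨by linarith [hs1.1, hysle.1], by linarith [hs1.2, hysle.2]⟩
    have hL2 := hLip ψ hdeg hsup y hy2 s hs2
    have habs2 : |ψ.eval y| ≤ |ψ.eval s| + |ψ.eval y - ψ.eval s| := by
      calc |ψ.eval y| = |ψ.eval s + (ψ.eval y - ψ.eval s)| := by ring_nf
        _ ≤ _ := abs_add_le _ _
    have h6 : L * |y - s| ≤ L * δ := mul_le_mul_of_nonneg_left hys hL0
    nlinarith [hL2, habs2]
  have hδε : (1:ℝ) ≤ δ ^ (-ε) := by
    calc (1:ℝ) = δ ^ (0:ℝ) := (Real.rpow_zero δ).symm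
      _ ≤ δ ^ (-ε) := Real.rpow_le_rpow_of_exponent_ge hδ hδ1 (by linarith)
  have hKbound : C₁ ≤ C₁ * δ ^ (-ε) := by nlinarith
  set ρ : Polynomial ℝ := (ψ - Polynomial.C δ) * (ψ + Polynomial.C δ) with hρdef
  have hρeval : ∀ t : ℝ, ρ.eval t = (ψ.eval t)^2 - δ^2 := by
    intro t; rw [hρdef]; simp; ring
  by_cases hρ0 : ρ = 0
  · -- constant case: ψ ≡ ±δ
    have habsδ : ∀ t : ℝ, |ψ.eval t| = δ := by
      rcases mul_eq_zero.mp hρ0 with h | h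
      · have hc : ψ = Polynomial.C δ := by rwa [sub_eq_zero] at h
        intro t; rw [hc, Polynomial.eval_C, abs_of_pos hδ]
      · have hc : ψ = -Polynomial.C δ := eq_neg_of_add_eq_zero_left h
        intro t; rw [hc]; simp [abs_of_pos hδ]
    refine ⟨{R₀}, by simpa using hC₁1, ?_, LY_overlap _ _ (by simpa using hC₁1), ?_⟩
    · intro S hS
      rw [Finset.mem_singleton] at hS
      rw [hS]
      refine ⟨?_, hR₀w, ?_⟩
      · intro x hx i
        have h2 := hx i
        have h3 := R₀.l_pos i
        calc |⟪x - R₀.b, R₀.u i⟫| ≤ 1 * R₀.l i := h2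
          _ ≤ 2 * R₀.l i := by linarith
      · intro x _
        rw [heval, habsδ]
        nlinarith
    · apply LY_dec _ _ _ hp
      · simpa using le_trans hC₁1 hKbound
      · intro x hx
        exact Set.mem_iUnion₂.mpr ⟨R₀, Finset.mem_singleton_self R₀, hx.1⟩
  · -- main case
    set gf : ℝ → ℝ := fun t => (ψ.eval t)^2 - δ^2 with hgf
    have hgcont : Continuous gf := by
      rw [hgf]; exact (ψ.continuous.pow 2).sub continuous_const
    have hIVT : ∀ u v : ℝ, gf u < 0 → 0 < gf v →
        ∃ z, gf z = 0 ∧ min u v < z ∧ z < max u v := by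
      intro u v hu hv
      rcases le_total u v with h | h
      · obtain ⟨z, hz, hgz⟩ := intermediate_value_Icc h hgcont.continuousOn ⟨hu.le, hv.le⟩
        refine ⟨z, hgz, ?_, ?_⟩
        · rw [min_eq_left h]
          rcases hz.1.lt_or_eq with h1 | h1
          · exact h1
          · exfalso; rw [h1] at hu; rw [hgz] at hu; exact absurd hu (lt_irrefl 0)
        · rw [max_eq_right h]
          rcases hz.2.lt_or_eq with h1 | h1
          · exact h1
          · exfalso; rw [← h1] at hv; rw [hgz] at hv; exact absurd hv (lt_irrefl 0)
      · obtain ⟨z, hz, hgz⟩ := intermediate_value_Icc' h hgcont.continuousOn ⟨hu.le, hv.le⟩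
        refine ⟨z, hgz, ?_, ?_⟩
        · rw [min_eq_right h]
          rcases hz.1.lt_or_eq with h1 | h1
          · exact h1
          · exfalso; rw [h1] at hv; rw [hgz] at hv; exact absurd hv (lt_irrefl 0)
        · rw [max_eq_left h]
          rcases hz.2.lt_or_eq with h1 | h1
          · exact h1
          · exfalso; rw [← h1] at hu; rw [hgz] at hu; exact absurd hu (lt_irrefl 0)
    have habs_le : ∀ t : ℝ, |ψ.eval t| ≤ δ → gf t ≤ 0 := by
      intro t h
      have h2 : (ψ.eval t)^2 ≤ δ^2 := by
        rw [← sq_abs]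
        exact pow_le_pow_left₀ (abs_nonneg _) h 2
      have h3 : gf t = (ψ.eval t)^2 - δ^2 := rfl
      linarith
    have habs_gt : ∀ t : ℝ, δ < |ψ.eval t| → 0 < gf t := by
      intro t h
      have h2 : δ^2 < (ψ.eval t)^2 := by
        rw [← sq_abs (ψ.eval t)]
        exact pow_lt_pow_left₀ h hδ.le (by norm_num : (2:ℕ) ≠ 0)
      have h3 : gf t = (ψ.eval t)^2 - δ^2 := rfl
      linarith
    set F : Finset ℝ := (ρ.roots.toFinset.filter (fun z => z ∈ Set.Icc A Bb)) ∪ {A, Bb}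
      with hFdef
    have hAB : A < Bb := by rw [hA, hB]; linarith
    have hAF : A ∈ F := by rw [hFdef]; apply Finset.mem_union_right; simp
    have hBF : Bb ∈ F := by rw [hFdef]; apply Finset.mem_union_right; simp
    have hFmem : ∀ z ∈ F, z ∈ Set.Icc A Bb := by
      intro z hz
      rw [hFdef] at hz
      rcases Finset.mem_union.mp hz with h | h
      · exact (Finset.mem_filter.mp h).2
      · rcases Finset.mem_insert.mp h with h | h
        · subst h; exact ⟨le_refl _, hAB.le⟩
        · rw [Finset.mem_singleton] at h; subst h; exact ⟨hAB.le, le_refl _⟩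
    have hFroot : ∀ z ∈ Set.Icc A Bb, gf z = 0 → z ∈ F := by
      intro z hz h0
      rw [hFdef]
      apply Finset.mem_union_left
      rw [Finset.mem_filter, Multiset.mem_toFinset, Polynomial.mem_roots']
      refine ⟨⟨hρ0, ?_⟩, hz⟩
      show ρ.eval z = 0
      rw [hρeval]
      exact h0
    have hFcard : (F.card : ℝ) ≤ 2*(d:ℝ) + 2 := by
      have h1 : F.card ≤ ρ.roots.toFinset.card + 2 := by
        rw [hFdef]
        refine le_trans (Finset.card_union_le _ _) ?_
        have h5 : ({A, Bb} : Finset ℝ).card ≤ 2 :=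
          le_trans (Finset.card_insert_le _ _) (by simp)
        have h6 := Finset.card_filter_le ρ.roots.toFinset (fun z => z ∈ Set.Icc A Bb)
        omega
      have h2 : ρ.roots.toFinset.card ≤ 2*d := by
        refine le_trans (Multiset.toFinset_card_le _) ?_
        refine le_trans (Polynomial.card_roots' ρ) ?_
        rw [hρdef]
        refine le_trans (Polynomial.natDegree_mul_le) ?_
        have ha : (ψ - Polynomial.C δ).natDegree ≤ d :=
          le_trans (Polynomial.natDegree_sub_le _ _)
            (max_le hdeg (by simp [Polynomial.natDegree_C]))
        have hb : (ψ + Polynomial.C δ).natDegree ≤ d :=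
          le_trans (Polynomial.natDegree_add_le _ _)
            (max_le hdeg (by simp [Polynomial.natDegree_C]))
        omega
      have h3 : F.card ≤ 2*d + 2 := by omega
      calc (F.card : ℝ) ≤ ((2*d+2 : ℕ) : ℝ) := by exact_mod_cast h3
        _ = 2*(d:ℝ)+2 := by push_cast; ring
    have hgap_small : ∀ s t : ℝ, s ∈ F → t ∈ F → s < t →
        (∀ z ∈ F, ¬(s < z ∧ z < t)) → |ψ.eval ((s+t)/2)| ≤ δ →
        ∀ y ∈ Set.Icc s t, |ψ.eval y| ≤ δ := by
      intro s t hsF htF hst hgap hmid y hy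
      by_contra hy'
      push_neg at hy'
      have hgy : 0 < gf y := habs_gt y hy'
      set m := (s+t)/2 with hm
      have hsm : s < m := by rw [hm]; linarith
      have hmt : m < t := by rw [hm]; linarith
      have hsab := hFmem s hsF
      have htab := hFmem t htF
      have hmab : m ∈ Set.Icc A Bb := ⟨le_trans hsab.1 hsm.le, le_trans hmt.le htab.2⟩
      have hgm : gf m < 0 := by
        rcases (habs_le m hmid).lt_or_eq with h | h
        · exact h
        · exact absurd ⟨hsm, hmt⟩ (hgap m (hFroot m hmab h))
      obtain ⟨z, hgz, hz1, hz2⟩ := hIVT m y hgm hgy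
      have hzs : s < z := lt_of_le_of_lt (le_min hsm.le hy.1) hz1
      have hzt : z < t := lt_of_lt_of_le hz2 (max_le hmt.le hy.2)
      have hzab : z ∈ Set.Icc A Bb := ⟨le_trans hsab.1 hzs.le, le_trans hzt.le htab.2⟩
      exact hgap z (hFroot z hzab hgz) ⟨hzs, hzt⟩
    set pairs : Finset (ℝ × ℝ) := (F ×ˢ F).filter
      (fun q => q.1 < q.2 ∧ |ψ.eval ((q.1+q.2)/2)| ≤ δ ∧ ∀ z ∈ F, ¬(q.1 < z ∧ z < q.2))
      with hpairs
    set pts : Finset ℝ := F.filter (fun s => |ψ.eval s| ≤ δ) with hpts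
    set 𝓢 : Finset (Parallelogram 1) :=
      (pairs.image fun q => LY_mkP ((q.1+q.2)/2) ((q.2-q.1)/2 + δ)) ∪
        (pts.image fun s => LY_mkP s δ) with h𝓢
    have hcard : (𝓢.card : ℝ) ≤ C₁ := by
      have h1 : 𝓢.card ≤ pairs.card + pts.card := by
        rw [h𝓢]
        exact le_trans (Finset.card_union_le _ _)
          (add_le_add Finset.card_image_le Finset.card_image_le)
      have h2 : pairs.card ≤ F.card * F.card := by
        rw [hpairs]
        exact le_trans (Finset.card_filter_le _ _) (le_of_eq (Finset.card_product _ _))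
      have h3 : pts.card ≤ F.card := by rw [hpts]; exact Finset.card_filter_le _ _
      have h4 : (𝓢.card : ℝ) ≤ (F.card : ℝ) * (F.card : ℝ) + (F.card : ℝ) := by
        exact_mod_cast le_trans h1 (add_le_add h2 h3)
      have hF0 : (0:ℝ) ≤ (F.card : ℝ) := Nat.cast_nonneg _
      rw [hC₁]
      nlinarith [hFcard]
    refine ⟨𝓢, hcard, ?_, LY_overlap _ _ hcard, ?_⟩
    · intro S hS
      rw [h𝓢] at hS
      rcases Finset.mem_union.mp hS with hS | hS
      · obtain ⟨q, hq, rfl⟩ := Finset.mem_image.mp hS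
        rw [hpairs, Finset.mem_filter] at hq
        obtain ⟨hqF, hq12, hqmid, hqgap⟩ := hq
        have hq1F : q.1 ∈ F := (Finset.mem_product.mp hqF).1
        have hq2F : q.2 ∈ F := (Finset.mem_product.mp hqF).2
        have h1ab := hFmem _ hq1F
        have h2ab := hFmem _ hq2F
        have hlq : 0 < (q.2 - q.1)/2 + δ := by linarith [hq12]
        refine ⟨?_, ?_, ?_⟩
        · intro y hy
          rw [Parallelogram.toSet, LY_mkP_mem _ _ _ hlq, one_mul] at hy
          rw [LY_dilate_mem]
          have h5 := abs_le.mp hy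
          rw [abs_le]
          constructor
          · linarith [h5.1, h1ab.1, hδl0, hA]
          · linarith [h5.2, h2ab.2, hδl0, hB]
        · intro i
          show δ ≤ ite _ _ _
          rw [if_pos hlq]
          linarith [hq12]
        · intro y hy
          rw [Parallelogram.toSet, LY_mkP_mem _ _ _ hlq, one_mul] at hy
          rw [heval]
          have htr : q.1 - δ ≤ y 0 ∧ y 0 ≤ q.2 + δ := by
            have h5 := abs_le.mp hy
            constructor
            · linarith [h5.1]
            · linarith [h5.2]
          set y' := max q.1 (min (y 0) q.2) with hy'
          have hy'Icc : y' ∈ Set.Icc q.1 q.2 :=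
            ⟨le_max_left _ _, max_le hq12.le (min_le_right _ _)⟩
          have hdist : |y 0 - y'| ≤ δ := by
            rcases le_total (y 0) q.1 with h | h
            · have h6 : y' = q.1 := by
                rw [hy', min_eq_left (h.trans hq12.le), max_eq_left h]
              rw [h6, abs_le]
              constructor
              · linarith [htr.1]
              · linarith
            · rcases le_total (y 0) q.2 with h2 | h2
              · have h6 : y' = y 0 := by rw [hy', min_eq_left h2, max_eq_right h]
                rw [h6]; simpa using hδ.le
              · have h6 : y' = q.2 := by
                  rw [hy', min_eq_right h2, max_eq_right hq12.le]
                rw [h6, abs_le]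
                constructor
                · linarith
                · linarith [htr.2]
          have hψy' : |ψ.eval y'| ≤ δ :=
            hgap_small q.1 q.2 hq1F hq2F hq12 hqgap hqmid y' hy'Icc
          have hy'ab : y' ∈ Set.Icc A Bb :=
            ⟨le_trans h1ab.1 hy'Icc.1, le_trans hy'Icc.2 h2ab.2⟩
          exact hnear y' (y 0) hy'ab hψy' hdist
      · obtain ⟨s, hs, rfl⟩ := Finset.mem_image.mp hS
        rw [hpts, Finset.mem_filter] at hs
        obtain ⟨hsF, hψs⟩ := hs
        have hsab := hFmem s hsF
        refine ⟨?_, ?_, ?_⟩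
        · intro y hy
          rw [Parallelogram.toSet, LY_mkP_mem _ _ _ hδ, one_mul] at hy
          rw [LY_dilate_mem]
          have h5 := abs_le.mp hy
          rw [abs_le]
          constructor
          · linarith [h5.1, hsab.1, hδl0, hA]
          · linarith [h5.2, hsab.2, hδl0, hB]
        · intro i
          show δ ≤ ite _ _ _
          rw [if_pos hδ]
        · intro y hy
          rw [Parallelogram.toSet, LY_mkP_mem _ _ _ hδ, one_mul] at hy
          rw [heval]
          exact hnear s (y 0) hsab hψs hy
    · apply LY_dec _ _ _ hp
      · exact le_trans hcard hKbound
      · intro x hx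
        obtain ⟨hxR, hxψ⟩ := hx
        rw [heval] at hxψ
        have ht : |x 0 - R₀.b 0| ≤ R₀.l 0 := (hR₀mem x).mp hxR
        have htab : x 0 ∈ Set.Icc A Bb := by
          rw [abs_le] at ht
          constructor
          · linarith [ht.1, hA]
          · linarith [ht.2, hB]
        by_cases htF : x 0 ∈ F
        · refine Set.mem_iUnion₂.mpr ⟨LY_mkP (x 0) δ, ?_, ?_⟩
          · rw [h𝓢]
            apply Finset.mem_union_right
            apply Finset.mem_image_of_mem
            rw [hpts]
            exact Finset.mem_filter.mpr ⟨htF, hxψ⟩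
          · rw [Parallelogram.toSet, LY_mkP_mem _ _ _ hδ, one_mul]
            simpa using hδ.le
        · have hneFle : (F.filter (fun z => z ≤ x 0)).Nonempty :=
            ⟨A, Finset.mem_filter.mpr ⟨hAF, htab.1⟩⟩
          have hneFge : (F.filter (fun z => x 0 ≤ z)).Nonempty :=
            ⟨Bb, Finset.mem_filter.mpr ⟨hBF, htab.2⟩⟩
          set α := (F.filter (fun z => z ≤ x 0)).max' hneFle with hα
          set β := (F.filter (fun z => x 0 ≤ z)).min' hneFge with hβ
          have hαmem := Finset.mem_filter.mp ((F.filter (fun z => z ≤ x 0)).max'_mem hneFle)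
          have hβmem := Finset.mem_filter.mp ((F.filter (fun z => x 0 ≤ z)).min'_mem hneFge)
          have hαF : α ∈ F := hαmem.1
          have hβF : β ∈ F := hβmem.1
          have hαt : α < x 0 := lt_of_le_of_ne hαmem.2 (fun h => htF (by rw [← h]; exact hαF))
          have htβ : x 0 < β := lt_of_le_of_ne hβmem.2 (fun h => htF (by rw [h]; exact hβF))
          have hgap : ∀ z ∈ F, ¬(α < z ∧ z < β) := by
            intro z hz hcon
            rcases le_total z (x 0) with h | h
            · have h7 := Finset.le_max' (F.filter (fun z => z ≤ x 0)) z
                (Finset.mem_filter.mpr ⟨hz, h⟩)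
              rw [← hα] at h7
              exact absurd h7 (not_le.mpr hcon.1)
            · have h7 := Finset.min'_le (F.filter (fun z => x 0 ≤ z)) z
                (Finset.mem_filter.mpr ⟨hz, h⟩)
              rw [← hβ] at h7
              exact absurd h7 (not_le.mpr hcon.2)
          have hαβ : α < β := hαt.trans htβ
          have hαab := hFmem α hαF
          have hβab := hFmem β hβF
          have hmid : |ψ.eval ((α+β)/2)| ≤ δ := by
            by_contra hm'
            push_neg at hm'
            have hgm : 0 < gf ((α+β)/2) := habs_gt _ hm'
            have hgt : gf (x 0) < 0 := by
              rcases (habs_le (x 0) hxψ).lt_or_eq with h | h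
              · exact h
              · exact absurd (hFroot (x 0) htab h) htF
            obtain ⟨z, hgz, hz1, hz2⟩ := hIVT (x 0) ((α+β)/2) hgt hgm
            have hαm : α < (α+β)/2 := by linarith
            have hmβ : (α+β)/2 < β := by linarith
            have hzα : α < z := lt_of_le_of_lt (le_min hαt.le hαm.le) hz1
            have hzβ : z < β := lt_of_lt_of_le hz2 (max_le htβ.le hmβ.le)
            have hzab : z ∈ Set.Icc A Bb :=
              ⟨le_trans hαab.1 hzα.le, le_trans hzβ.le hβab.2⟩
            exact hgap z (hFroot z hzab hgz) ⟨hzα, hzβ⟩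
          have hpairmem : (α, β) ∈ pairs := by
            rw [hpairs]
            exact Finset.mem_filter.mpr
              ⟨Finset.mem_product.mpr ⟨hαF, hβF⟩, hαβ, hmid, hgap⟩
          have hlq : 0 < (β-α)/2 + δ := by linarith
          refine Set.mem_iUnion₂.mpr ⟨LY_mkP ((α+β)/2) ((β-α)/2 + δ), ?_, ?_⟩
          · rw [h𝓢]
            apply Finset.mem_union_left
            exact Finset.mem_image_of_mem _ hpairmem
          · rw [Parallelogram.toSet, LY_mkP_mem _ _ _ hlq, one_mul, abs_le]
            constructor
            · linarith [hαt]
            · linarith [htβ]
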